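/- Let A and Â be n×m real matrices and let k ≤ min(n,m). Suppose ‖Â − A‖ ≤ ε with ε < σ_k(A)/12. Let (Û, D̂, V̂) be a rank-k truncated SVD of Â (which exists since σ_k(Â) ≥ σ_k(A) − ε > 0) and let Ŵ = Û D̂⁻¹ be the associated whitening matrix. Then ‖I_k − Ŵᵀ A Aᵀ Ŵ‖ ≤ 6ε/σ_k(A). -/

import Mathlib

open Matrix

/-- The `j`-th largest singular value (1-indexed) of a real `n × m` matrix,
defined as the square root of the `j`-th largest eigenvalue of `Aᵀ * A`;
it is `0` when `j = 0` or `j > m`. -/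
noncomputable def sval {n m : ℕ} (A : Matrix (Fin n) (Fin m) ℝ) (j : ℕ) : ℝ :=
  if 1 ≤ j ∧ j ≤ m then
    (((Finset.univ.val.map fun i =>
        Real.sqrt ((Matrix.isHermitian_conjTranspose_mul_self A).eigenvalues i)).sort (· ≤ ·)).getD
      (m - j) 0)
  else 0

/-- The spectral norm (ℓ₂ operator norm) of a real matrix, i.e. its largest singular value. -/
noncomputable def matSpectralNorm {n m : ℕ} (A : Matrix (Fin n) (Fin m) ℝ) : ℝ := sval A 1

/-- Euclidean norm of a vector. -/
noncomputable def evnorm {n : ℕ} (x : Fin n → ℝ) : ℝ := Real.sqrt (∑ i, (x i) ^ 2)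

/-- `M^{1/2}`: the unique positive semidefinite square root of a positive semidefinite
real matrix (junk value `0` if `M` is not positive semidefinite). -/
noncomputable def msqrt {k : ℕ} (M : Matrix (Fin k) (Fin k) ℝ) : Matrix (Fin k) (Fin k) ℝ :=
  by classical exact if h : M.PosSemidef then
    ((h.1.eigenvectorUnitary : Matrix (Fin k) (Fin k) ℝ) *
      Matrix.diagonal (fun i => ((Real.sqrt (h.1.eigenvalues i) : ℝ) : ℝ)) *
      (star h.1.eigenvectorUnitary : Matrix (Fin k) (Fin k) ℝ)) else 0

/-!
With `Y = Ŵᵀ (Â - A)`, the SVD relation `Âᵀ Û = V̂ D̂` gives `Ŵᵀ Â = V̂ᵀ`, hence `Ŵᵀ A = V̂ᵀ - Y` and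
`I - Ŵᵀ A Aᵀ Ŵ = V̂ᵀ Yᵀ + Y V̂ - Y Yᵀ`, whose norm is at most `2 ‖Y‖ + ‖Y‖²`. Weyl's inequality
`σ_k(Â) ≥ σ_k(A) - ε` gives `‖Ŵ‖ ≤ 1 / σ_k(Â)`, so `‖Y‖ ≤ ε / (σ_k(A) - ε) ≤ 1/11`, and then
`2 ‖Y‖ + ‖Y‖² ≤ 6 ε / σ_k(A)`.
-/

open scoped Matrix.Norms.L2Operator RealInnerProductSpace

section OrthonormalBasis

variable {ι E : Type*} [Fintype ι] [NormedAddCommGroup E] [InnerProductSpace ℝ E]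

theorem OrthonormalBasis.sum_mul_inner_sq_le (u : OrthonormalBasis ι ℝ E) (ν : ι → ℝ) {c : ℝ}
    (x : E) (h : ∀ i, ⟪u i, x⟫ ≠ 0 → ν i ≤ c) : ∑ i, ν i * ⟪u i, x⟫ ^ 2 ≤ c * ‖x‖ ^ 2 := by
  rw [← u.sum_sq_inner_right, Finset.mul_sum]
  refine Finset.sum_le_sum fun i _ => ?_
  by_cases hi : ⟪u i, x⟫ = 0
  · simp [hi]
  · exact mul_le_mul_of_nonneg_right (h i hi) (sq_nonneg _)

theorem OrthonormalBasis.le_sum_mul_inner_sq (u : OrthonormalBasis ι ℝ E) (ν : ι → ℝ) {c : ℝ}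
    (x : E) (h : ∀ i, ⟪u i, x⟫ ≠ 0 → c ≤ ν i) : c * ‖x‖ ^ 2 ≤ ∑ i, ν i * ⟪u i, x⟫ ^ 2 := by
  have := u.sum_mul_inner_sq_le (-ν) x (c := -c) fun i hi => neg_le_neg (h i hi)
  simp only [Pi.neg_apply, neg_mul, Finset.sum_neg_distrib] at this
  linarith

theorem OrthonormalBasis.inner_eq_zero_of_mem_span (u : OrthonormalBasis ι ℝ E) {s : Set ι}
    {x : E} (hx : x ∈ Submodule.span ℝ (Set.range fun i : s => u i)) {j : ι} (hj : j ∉ s) :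
    ⟪u j, x⟫ = 0 := by
  induction hx using Submodule.span_induction with
  | mem y hy =>
    obtain ⟨i, rfl⟩ := hy
    exact u.orthonormal.2 fun h => hj (h ▸ i.2)
  | zero => exact inner_zero_right _
  | add y z _ _ hy hz => rw [inner_add_right, hy, hz, add_zero]
  | smul c y _ hy => rw [real_inner_smul_right, hy, mul_zero]

end OrthonormalBasis

theorem Submodule.exists_norm_eq_one_mem_inf {E : Type*} [NormedAddCommGroup E]
    [InnerProductSpace ℝ E] [FiniteDimensional ℝ E] {S T : Submodule ℝ E}
    (h : Module.finrank ℝ E < Module.finrank ℝ S + Module.finrank ℝ T) :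
    ∃ x ∈ S, x ∈ T ∧ ‖x‖ = 1 := by
  have hpos : 0 < Module.finrank ℝ ↥(S ⊓ T) := by
    have := Submodule.finrank_sup_add_finrank_inf_eq S T
    have := (S ⊔ T).finrank_le
    omega
  obtain ⟨⟨x, hxS, hxT⟩, hx⟩ := Module.finrank_pos_iff_exists_ne_zero.mp hpos
  have hx : x ≠ 0 := fun h => hx (Subtype.ext h)
  exact ⟨‖x‖⁻¹ • x, S.smul_mem _ hxS, T.smul_mem _ hxT, norm_smul_inv_norm hx⟩

section MatrixNorm

variable {m n : Type*} [Fintype m] [Fintype n]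

theorem Matrix.norm_toEuclideanLin_le [DecidableEq n] (A : Matrix m n ℝ)
    (x : EuclideanSpace ℝ n) : ‖toEuclideanLin A x‖ ≤ ‖A‖ * ‖x‖ :=
  A.l2_opNorm_mulVec x

theorem Matrix.l2_opNorm_le_of_forall [DecidableEq n] (A : Matrix m n ℝ) {c : ℝ} (hc : 0 ≤ c)
    (h : ∀ x, ‖toEuclideanLin A x‖ ≤ c * ‖x‖) : ‖A‖ ≤ c :=
  ContinuousLinearMap.opNorm_le_bound _ hc h

theorem Matrix.l2_opNorm_transpose [DecidableEq m] [DecidableEq n] (A : Matrix m n ℝ) :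
    ‖Aᵀ‖ = ‖A‖ := by
  rw [← conjTranspose_eq_transpose_of_trivial, l2_opNorm_conjTranspose]

theorem Matrix.l2_opNorm_one_le [DecidableEq n] : ‖(1 : Matrix n n ℝ)‖ ≤ 1 := by
  rw [← diagonal_one, l2_opNorm_diagonal]
  exact pi_norm_le_iff_of_nonneg zero_le_one |>.mpr fun _ => by simp

theorem Matrix.l2_opNorm_le_one_of_transpose_mul_self [DecidableEq n] {U : Matrix m n ℝ}
    (hU : Uᵀ * U = 1) : ‖U‖ ≤ 1 := by
  have h : ‖U‖ * ‖U‖ ≤ 1 := by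
    rw [← l2_opNorm_conjTranspose_mul_self, conjTranspose_eq_transpose_of_trivial, hU]
    exact l2_opNorm_one_le
  nlinarith [norm_nonneg U]

end MatrixNorm

theorem Multiset.sort_map_univ_eq_ofFn {α : Type*} [LinearOrder α] {m : ℕ} (f : Fin m → α) :
    (Finset.univ.val.map f).sort (· ≤ ·) = List.ofFn (f ∘ Tuple.sort f) := by
  refine List.Perm.eq_of_sortedLE (Multiset.pairwise_sort _ _).sortedLE
    (Tuple.monotone_sort f).sortedLE_ofFn (Multiset.coe_eq_coe.mp ?_)
  rw [Multiset.sort_eq, ← Fin.univ_val_map, ← Multiset.map_map, Multiset.map_univ_val_equiv]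

theorem Matrix.norm_toEuclideanLin_sq_eq_sum {m n : Type*} [Fintype m] [Fintype n]
    [DecidableEq m] [DecidableEq n] (A : Matrix m n ℝ) (x : EuclideanSpace ℝ n) :
    ‖toEuclideanLin A x‖ ^ 2 =
      ∑ i, (isHermitian_conjTranspose_mul_self A).eigenvalues i *
        ⟪(isHermitian_conjTranspose_mul_self A).eigenvectorBasis i, x⟫ ^ 2 := by
  set hH := isHermitian_conjTranspose_mul_self A
  set b := hH.eigenvectorBasis
  have hAA : ‖toEuclideanLin A x‖ ^ 2 = ⟪x, toEuclideanLin (Aᴴ * A) x⟫ := by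
    rw [toLpLin_mul_same, LinearMap.comp_apply, toEuclideanLin_conjTranspose_eq_adjoint,
      LinearMap.adjoint_inner_right, real_inner_self_eq_norm_sq]
  have hb : ∀ i, toEuclideanLin (Aᴴ * A) (b i) = hH.eigenvalues i • b i := fun i =>
    congrArg (WithLp.toLp 2) (hH.mulVec_eigenvectorBasis i)
  rw [hAA]
  nth_rewrite 2 [← b.sum_repr' x]
  simp only [map_sum, map_smul, hb, smul_smul, inner_sum, real_inner_smul_right]
  refine Finset.sum_congr rfl fun i _ => ?_
  rw [real_inner_comm]
  ring

section SingularValues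

variable {n m : ℕ}

theorem sval_nonneg (A : Matrix (Fin n) (Fin m) ℝ) (j : ℕ) : 0 ≤ sval A j := by
  unfold sval
  split_ifs with hj
  · have hlt : m - j < m := by omega
    rw [Multiset.sort_map_univ_eq_ofFn, List.getD_eq_getElem _ _ (by simpa using hlt)]
    simp
  · exact le_rfl

theorem one_le_and_le_of_sval_pos {A : Matrix (Fin n) (Fin m) ℝ} {j : ℕ} (h : 0 < sval A j) :
    1 ≤ j ∧ j ≤ m := by
  by_contra hj
  simp [sval, if_neg hj] at h

/-- `u` is an eigenbasis of `Aᵀ A` ordered by increasing eigenvalue, so the two conditions on `x`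
say that it lies in the span of the top `j`, resp. the bottom `m - j + 1`, eigenvectors. -/
theorem exists_orthonormalBasis_sval_bounds (A : Matrix (Fin n) (Fin m) ℝ) {j : ℕ}
    (hj : 1 ≤ j) (hjm : j ≤ m) :
    ∃ u : OrthonormalBasis (Fin m) ℝ (EuclideanSpace ℝ (Fin m)),
      (∀ x, (∀ i : Fin m, ⟪u i, x⟫ ≠ 0 → m - j ≤ i) → sval A j * ‖x‖ ≤ ‖toEuclideanLin A x‖) ∧
      (∀ x, (∀ i : Fin m, ⟪u i, x⟫ ≠ 0 → i ≤ m - j) → ‖toEuclideanLin A x‖ ≤ sval A j * ‖x‖) := by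
  set hH := isHermitian_conjTranspose_mul_self A
  set μ := hH.eigenvalues
  have hμ : ∀ i, 0 ≤ μ i := (posSemidef_conjTranspose_mul_self A).eigenvalues_nonneg
  set e := Tuple.sort fun i => √(μ i)
  have hmono : Monotone (μ ∘ e) := fun i i' hii' =>
    (Real.sqrt_le_sqrt_iff (hμ _)).mp (Tuple.monotone_sort (fun i => √(μ i)) hii')
  set a : Fin m := ⟨m - j, by omega⟩
  have hsval : sval A j = √(μ (e a)) := by
    rw [sval, if_pos ⟨hj, hjm⟩, Multiset.sort_map_univ_eq_ofFn,
      List.getD_eq_getElem _ _ (by simp; omega)]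
    simp [a, e, μ]
  have hnorm (x : EuclideanSpace ℝ (Fin m)) :
      ‖toEuclideanLin A x‖ ^ 2 =
        ∑ i, (μ ∘ e) i * ⟪hH.eigenvectorBasis.reindex e.symm i, x⟫ ^ 2 := by
    rw [norm_toEuclideanLin_sq_eq_sum, ← Equiv.sum_comp e]
    simp [μ]
  have hsq : sval A j ^ 2 = μ (e a) := by rw [hsval, Real.sq_sqrt (hμ _)]
  refine ⟨hH.eigenvectorBasis.reindex e.symm, fun x hx => ?_, fun x hx => ?_⟩
  · refine le_of_pow_le_pow_left₀ two_ne_zero (norm_nonneg _) ?_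
    rw [mul_pow, hsq, hnorm]
    exact OrthonormalBasis.le_sum_mul_inner_sq _ _ x fun i hi => hmono (hx i hi)
  · refine le_of_pow_le_pow_left₀ two_ne_zero (by positivity [sval_nonneg A j]) ?_
    rw [mul_pow, hsq, hnorm]
    exact OrthonormalBasis.sum_mul_inner_sq_le _ _ x fun i hi => hmono (hx i hi)

theorem sval_one_eq_norm (A : Matrix (Fin n) (Fin m) ℝ) : sval A 1 = ‖A‖ := by
  rcases Nat.eq_zero_or_pos m with rfl | hm
  · simp [sval, Subsingleton.elim A 0]
  obtain ⟨u, hlow, hup⟩ := exists_orthonormalBasis_sval_bounds A le_rfl hm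
  refine le_antisymm ?_ (A.l2_opNorm_le_of_forall (sval_nonneg A 1) fun x => hup x fun i _ => ?_)
  · set l : Fin m := ⟨m - 1, by omega⟩
    have hl : sval A 1 * ‖u l‖ ≤ ‖toEuclideanLin A (u l)‖ := hlow (u l) fun i hi => by
      obtain rfl : i = l := by_contra fun h => hi (u.orthonormal.2 h)
      exact le_rfl
    simpa [u.orthonormal.1 l] using hl.trans (A.norm_toEuclideanLin_le (u l))
  · omega

/-- By counting dimensions there is a unit vector `x` in the span of the top `j'` eigenvectors of
`Aᵀ A` and of the bottom `m - j + 1` of `Bᵀ B`; then `σ_{j'}(A) ≤ ‖A x‖` and `‖B x‖ ≤ σ_j(B)`. -/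
theorem sval_le_sval_add_norm_sub (A B : Matrix (Fin n) (Fin m) ℝ) {j j' : ℕ} (hj : 1 ≤ j)
    (hjj' : j ≤ j') : sval A j' ≤ sval B j + ‖A - B‖ := by
  rcases le_or_gt j' m with hj'm | hj'm
  swap
  · rw [sval, if_neg (by omega)]
    positivity [sval_nonneg B j]
  obtain ⟨u, hlow, -⟩ := exists_orthonormalBasis_sval_bounds A (hj.trans hjj') hj'm
  obtain ⟨w, -, hup⟩ := exists_orthonormalBasis_sval_bounds B hj (hjj'.trans hj'm)
  set S := Submodule.span ℝ (Set.range fun i : Finset.Ici (⟨m - j', by omega⟩ : Fin m) => u i)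
  set T := Submodule.span ℝ (Set.range fun i : Finset.Iic (⟨m - j, by omega⟩ : Fin m) => w i)
  have hS : Module.finrank ℝ S = j' := by
    refine (finrank_span_eq_card
      (u.orthonormal.linearIndependent.comp _ Subtype.val_injective)).trans ?_
    rw [Fintype.card_coe, Fin.card_Ici, Fin.val_mk]
    omega
  have hT : Module.finrank ℝ T = m - j + 1 := by
    refine (finrank_span_eq_card
      (w.orthonormal.linearIndependent.comp _ Subtype.val_injective)).trans ?_
    rw [Fintype.card_coe, Fin.card_Iic]
  obtain ⟨x, hxS, hxT, hx⟩ := Submodule.exists_norm_eq_one_mem_inf (S := S) (T := T)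
    (by rw [hS, hT, finrank_euclideanSpace_fin]; omega)
  have hAx : sval A j' ≤ ‖toEuclideanLin A x‖ := by
    simpa [hx] using hlow x fun i hi => by
      by_contra h
      exact hi (u.inner_eq_zero_of_mem_span hxS (by simp [Fin.lt_def] at h ⊢; omega))
  have hBx : ‖toEuclideanLin B x‖ ≤ sval B j := by
    simpa [hx] using hup x fun i hi => by
      by_contra h
      exact hi (w.inner_eq_zero_of_mem_span hxT (by simp [Fin.lt_def] at h ⊢; omega))
  have hsplit : toEuclideanLin A x = toEuclideanLin B x + toEuclideanLin (A - B) x := by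
    rw [map_sub, LinearMap.sub_apply, add_sub_cancel]
  calc sval A j' ≤ ‖toEuclideanLin B x + toEuclideanLin (A - B) x‖ := hsplit ▸ hAx
    _ ≤ ‖toEuclideanLin B x‖ + ‖A - B‖ * ‖x‖ :=
      (norm_add_le _ _).trans (add_le_add_right ((A - B).norm_toEuclideanLin_le x) _)
    _ ≤ sval B j + ‖A - B‖ := by rw [hx, mul_one]; linarith

theorem sval_anti (A : Matrix (Fin n) (Fin m) ℝ) {j j' : ℕ} (hj : 1 ≤ j) (hjj' : j ≤ j') :
    sval A j' ≤ sval A j := by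
  simpa using sval_le_sval_add_norm_sub A A hj hjj'

end SingularValues

theorem Matrix.transpose_mul_inv_mul_eq_transpose {n m k : Type*} [Fintype n] [Fintype k]
    [DecidableEq k] {Ahat : Matrix n m ℝ} {U : Matrix n k ℝ} {V : Matrix m k ℝ}
    {D : Matrix k k ℝ} (hAU : Ahatᵀ * U = V * D) (hD : IsUnit D.det) :
    (U * D⁻¹)ᵀ * Ahat = Vᵀ := by
  rw [← transpose_transpose Ahat, ← transpose_mul, ← Matrix.mul_assoc, hAU, Matrix.mul_assoc,
    mul_nonsing_inv _ hD, Matrix.mul_one]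

section Whitening

variable {n m k : Type*} [Fintype n] [Fintype m] [Fintype k] [DecidableEq k]

theorem Matrix.l2_opNorm_mul_diagonal_inv_le {U : Matrix n k ℝ} (hU : Uᵀ * U = 1) {d : k → ℝ}
    {s : ℝ} (hs : 0 < s) (hd : ∀ i, s ≤ d i) : ‖U * (diagonal d)⁻¹‖ ≤ s⁻¹ := by
  have hinv : (diagonal d)⁻¹ = diagonal d⁻¹ := inv_eq_left_inv <| by
    rw [diagonal_mul_diagonal, ← diagonal_one]
    exact congrArg diagonal (funext fun i => inv_mul_cancel₀ (hs.trans_le (hd i)).ne')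
  have hdinv : ‖diagonal d⁻¹‖ ≤ s⁻¹ := by
    rw [l2_opNorm_diagonal]
    refine pi_norm_le_iff_of_nonneg (by positivity) |>.mpr fun i => ?_
    rw [Pi.inv_apply, norm_inv, Real.norm_of_nonneg (hs.le.trans (hd i))]
    exact inv_anti₀ hs (hd i)
  calc ‖U * (diagonal d)⁻¹‖ ≤ ‖U‖ * ‖diagonal d⁻¹‖ := hinv ▸ l2_opNorm_mul _ _
    _ ≤ 1 * s⁻¹ := by gcongr; exact l2_opNorm_le_one_of_transpose_mul_self hU
    _ = s⁻¹ := one_mul _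

theorem Matrix.l2_opNorm_one_sub_mul_transpose_le [DecidableEq m] {V : Matrix m k ℝ}
    (hV : Vᵀ * V = 1) (Y : Matrix k m ℝ) : ‖1 - (Vᵀ - Y) * (Vᵀ - Y)ᵀ‖ ≤ 2 * ‖Y‖ + ‖Y‖ ^ 2 := by
  have hV1 : ‖V‖ ≤ 1 := l2_opNorm_le_one_of_transpose_mul_self hV
  have hexpand : 1 - (Vᵀ - Y) * (Vᵀ - Y)ᵀ = Vᵀ * Yᵀ + Y * V - Y * Yᵀ := by
    rw [transpose_sub, transpose_transpose, Matrix.sub_mul, Matrix.mul_sub, Matrix.mul_sub, hV]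
    abel
  rw [hexpand]
  calc ‖Vᵀ * Yᵀ + Y * V - Y * Yᵀ‖ ≤ ‖Vᵀ‖ * ‖Yᵀ‖ + ‖Y‖ * ‖V‖ + ‖Y‖ * ‖Yᵀ‖ :=
        (norm_sub_le _ _).trans (add_le_add ((norm_add_le _ _).trans
          (add_le_add (l2_opNorm_mul _ _) (l2_opNorm_mul _ _))) (l2_opNorm_mul _ _))
    _ ≤ 2 * ‖Y‖ + ‖Y‖ ^ 2 := by
      simp only [l2_opNorm_transpose]
      nlinarith [norm_nonneg Y]

theorem Matrix.l2_opNorm_one_sub_whitened_gram_le [DecidableEq n] [DecidableEq m]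
    {A Ahat : Matrix n m ℝ} {U : Matrix n k ℝ} {V : Matrix m k ℝ} {d : k → ℝ} {s : ℝ}
    (hU : Uᵀ * U = 1) (hV : Vᵀ * V = 1) (hAU : Ahatᵀ * U = V * diagonal d) (hs : 0 < s)
    (hd : ∀ i, s ≤ d i) :
    ‖1 - (U * (diagonal d)⁻¹)ᵀ * A * Aᵀ * (U * (diagonal d)⁻¹)‖ ≤
      2 * (‖Ahat - A‖ / s) + (‖Ahat - A‖ / s) ^ 2 := by
  set W := U * (diagonal d)⁻¹
  have hdet : IsUnit (diagonal d).det := by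
    rw [det_diagonal]
    exact (Finset.prod_pos fun i _ => hs.trans_le (hd i)).ne'.isUnit
  set Y := Wᵀ * (Ahat - A) with hYdef
  have hWA : Wᵀ * A = Vᵀ - Y := by
    rw [← transpose_mul_inv_mul_eq_transpose hAU hdet, hYdef, Matrix.mul_sub, sub_sub_cancel]
  have hY : ‖Y‖ ≤ ‖Ahat - A‖ / s := calc
    ‖Y‖ ≤ ‖W‖ * ‖Ahat - A‖ := l2_opNorm_transpose W ▸ l2_opNorm_mul _ _
    _ ≤ s⁻¹ * ‖Ahat - A‖ := by gcongr; exact l2_opNorm_mul_diagonal_inv_le hU hs hd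
    _ = ‖Ahat - A‖ / s := inv_mul_eq_div _ _
  calc ‖1 - Wᵀ * A * Aᵀ * W‖ = ‖1 - (Vᵀ - Y) * (Vᵀ - Y)ᵀ‖ := by
        rw [← hWA, transpose_mul Wᵀ A, transpose_transpose, Matrix.mul_assoc (Wᵀ * A)]
    _ ≤ 2 * ‖Y‖ + ‖Y‖ ^ 2 := l2_opNorm_one_sub_mul_transpose_le hV Y
    _ ≤ 2 * (‖Ahat - A‖ / s) + (‖Ahat - A‖ / s) ^ 2 := by gcongr

end Whitening

theorem two_mul_div_add_div_sq_le {ε σ s : ℝ} (hε : 0 ≤ ε) (hεσ : ε < σ / 12)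
    (hs : σ - ε ≤ s) : 2 * (ε / s) + (ε / s) ^ 2 ≤ 6 * ε / σ := by
  have hσ : 0 < σ := by linarith
  have hs0 : 0 < s := by linarith
  have ht : ε / s ≤ 1 / 11 := by rw [div_le_div_iff₀ hs0 (by norm_num)]; linarith
  have ht' : ε / s ≤ 12 / 11 * (ε / σ) := by
    rw [div_le_iff₀ hs0, mul_comm, ← mul_assoc, ← mul_div_assoc, le_div_iff₀ hσ]
    nlinarith
  have hεσ' : 0 ≤ ε / σ := by positivity
  calc 2 * (ε / s) + (ε / s) ^ 2 ≤ 23 / 11 * (ε / s) := by nlinarith [div_nonneg hε hs0.le]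
    _ ≤ 6 * ε / σ := by rw [mul_div_assoc]; nlinarith

theorem whitened_gram_close_to_identity_general
    {n m k : ℕ}
    (A Ahat : Matrix (Fin n) (Fin m) ℝ) (ε : ℝ)
    (hpert : matSpectralNorm (Ahat - A) ≤ ε) (hε : ε < sval A k / 12)
    (Uhat : Matrix (Fin n) (Fin k) ℝ) (Vhat : Matrix (Fin m) (Fin k) ℝ)
    (Dhat : Matrix (Fin k) (Fin k) ℝ)
    (hU : Uhatᵀ * Uhat = 1) (hV : Vhatᵀ * Vhat = 1)
    (hD : Dhat = Matrix.diagonal fun i : Fin k => sval Ahat (i.val + 1))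
    (hAU : Ahatᵀ * Uhat = Vhat * Dhat)
    (What : Matrix (Fin n) (Fin k) ℝ) (hW : What = Uhat * Dhat⁻¹) :
    matSpectralNorm ((1 : Matrix (Fin k) (Fin k) ℝ) - Whatᵀ * A * Aᵀ * What) ≤
      6 * ε / sval A k := by
  rw [matSpectralNorm, sval_one_eq_norm] at hpert ⊢
  have hε0 : 0 ≤ ε := (norm_nonneg _).trans hpert
  obtain ⟨hk, -⟩ := one_le_and_le_of_sval_pos (show 0 < sval A k by linarith)
  have hs : sval A k - ε ≤ sval Ahat k := by
    linarith [sval_le_sval_add_norm_sub A Ahat hk le_rfl, norm_sub_rev A Ahat]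
  have hspos : 0 < sval Ahat k := by linarith
  subst hW hD
  calc _ ≤ 2 * (‖Ahat - A‖ / sval Ahat k) + (‖Ahat - A‖ / sval Ahat k) ^ 2 :=
        l2_opNorm_one_sub_whitened_gram_le hU hV hAU hspos fun i =>
          sval_anti Ahat (by omega) (by omega)
    _ ≤ 2 * (ε / sval Ahat k) + (ε / sval Ahat k) ^ 2 := by gcongr
    _ ≤ 6 * ε / sval A k := two_mul_div_add_div_sq_le hε0 hε hs

/-- If `‖Â − A‖ ≤ ε < σ_k(A)/12` and `(Û, D̂, V̂)` is a rank-`k` truncated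
SVD of `Â` with whitening matrix `Ŵ = Û D̂⁻¹`, then
`‖I_k − Ŵᵀ A Aᵀ Ŵ‖ ≤ 6 ε / σ_k(A)`. -/
theorem whitened_gram_close_to_identity
    {n m k : ℕ} (hk : k ≤ min n m)
    (A Ahat : Matrix (Fin n) (Fin m) ℝ) (ε : ℝ)
    (hpert : matSpectralNorm (Ahat - A) ≤ ε) (hε : ε < sval A k / 12)
    (Uhat : Matrix (Fin n) (Fin k) ℝ) (Vhat : Matrix (Fin m) (Fin k) ℝ)
    (Dhat : Matrix (Fin k) (Fin k) ℝ)
    (hU : Uhatᵀ * Uhat = 1) (hV : Vhatᵀ * Vhat = 1)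
    (hD : Dhat = Matrix.diagonal fun i : Fin k => sval Ahat (i.val + 1))
    (hAV : Ahat * Vhat = Uhat * Dhat) (hAU : Ahatᵀ * Uhat = Vhat * Dhat)
    (What : Matrix (Fin n) (Fin k) ℝ) (hW : What = Uhat * Dhat⁻¹) :
    matSpectralNorm ((1 : Matrix (Fin k) (Fin k) ℝ) - Whatᵀ * A * Aᵀ * What) ≤
      6 * ε / sval A k :=
  whitened_gram_close_to_identity_general A Ahat ε hpert hε Uhat Vhat Dhat hU hV hD hAU What hW
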